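/- Let G be a graph and H a finite family of connected nonnull subgraphs of G. Then the tree-independence number of the derived graph G(H) is at most the tree-independence number of G. In particular, for chordal G (tree-α(G) ≤ 1), the graph G(H) is chordal. -/

import Mathlib

open SimpleGraph

/-- `S` is an independent set in `G`. -/
def IsIndepOn {V : Type} (G : SimpleGraph V) (S : Set V) : Prop :=
  S.Pairwise fun u v => ¬ G.Adj u v

/-- The independence number of `G`. -/
noncomputable def indepNum {V : Type} (G : SimpleGraph V) : ℕ :=
  sSup {n | ∃ S : Set V, IsIndepOn G S ∧ S.ncard = n}

/-- The clique number of `G`. -/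
noncomputable def cliqueNumber {V : Type} (G : SimpleGraph V) : ℕ :=
  sSup {n | ∃ S : Set V, G.IsClique S ∧ S.ncard = n}

/-- A tree decomposition of a graph `G`. -/
structure TreeDecomp {V : Type} (G : SimpleGraph V) where
  ι : Type
  tree : SimpleGraph ι
  tree_isTree : tree.IsTree
  bag : ι → Set V
  mem_bag : ∀ v : V, ∃ t, v ∈ bag t
  edge_bag : ∀ ⦃u v : V⦄, G.Adj u v → ∃ t, u ∈ bag t ∧ v ∈ bag t
  bag_connected : ∀ v : V, (tree.induce {t | v ∈ bag t}).Connected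

/-- The independence number of a family of bags: the maximum independence number
of a subgraph of `G` induced by some bag. -/
noncomputable def bagAlpha {V : Type} (G : SimpleGraph V) {ι : Type} (bag : ι → Set V) : ℕ :=
  sSup {n | ∃ t, ∃ S : Set V, S ⊆ bag t ∧ IsIndepOn G S ∧ S.ncard = n}

/-- The independence number of a tree decomposition. -/
noncomputable def tdAlpha {V : Type} {G : SimpleGraph V} (td : TreeDecomp G) : ℕ :=
  bagAlpha G td.bag

/-- The width of a tree decomposition: maximum bag size minus one. -/
noncomputable def tdWidth {V : Type} {G : SimpleGraph V} (td : TreeDecomp G) : ℕ :=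
  sSup {n | ∃ t, (td.bag t).ncard = n} - 1

/-- The treewidth of `G`. -/
noncomputable def treewidth {V : Type} (G : SimpleGraph V) : ℕ :=
  sInf {w | ∃ td : TreeDecomp G, tdWidth td = w}

/-- The tree-independence number of `G`. -/
noncomputable def treeIndepNum {V : Type} (G : SimpleGraph V) : ℕ :=
  sInf {k | ∃ td : TreeDecomp G, tdAlpha td = k}

/-- A graph is chordal if it has no induced cycle of length at least four. -/
def Chordal {V : Type} (G : SimpleGraph V) : Prop :=
  ∀ n : ℕ, 4 ≤ n → IsEmpty (cycleGraph n ↪g G)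

/-- The derived graph `G(H)` of a family `H` of subgraphs of `G`: vertices are the
members of the family, two distinct members being adjacent if and only if they share
a vertex or `G` has an edge with one endpoint in each of them. -/
def derivedGraph {V : Type} (G : SimpleGraph V) {J : Type} (H : J → G.Subgraph) :
    SimpleGraph J :=
  SimpleGraph.fromRel fun i j =>
    (∃ v, v ∈ (H i).verts ∧ v ∈ (H j).verts) ∨
    (∃ a b, a ∈ (H i).verts ∧ b ∈ (H j).verts ∧ G.Adj a b)

/-!
Keep the tree of a tree decomposition `(T, X)` of `G` and put `j` into the bag of `t` whenever
`H j` meets `X t`. The nodes whose bag contains `j` form a subtree because `H j` is connected and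
each of its edges lies in a common bag of `G`. An independent set of `G(H)` inside a new bag has
pairwise distinct and pairwise nonadjacent representatives in the old bag, so no independence
number of a bag grows. If every bag of `G` is a clique, so is every new bag, and a graph with a
tree decomposition into cliques is chordal: two nonadjacent vertices of an induced cycle are
separated by the clique `X s ∩ X t` of a tree edge `st`, which then contains an inner vertex
of each of the two arcs between them, and these are not adjacent.
-/

namespace SimpleGraph

variable {V ι : Type*} {G : SimpleGraph V}

lemma exists_walk_support_subset_of_connected_induce {s : Set V} (h : (G.induce s).Connected)
    {x y : V} (hx : x ∈ s) (hy : y ∈ s) : ∃ p : G.Walk x y, ∀ z ∈ p.support, z ∈ s := by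
  obtain ⟨p, hp⟩ := (Subgraph.preconnected_iff_forall_exists_walk_subgraph _).mp
    (preconnected_induce_iff.mp h.preconnected) hx hy
  exact ⟨p, fun z hz => hp.1 ((Walk.mem_verts_toSubgraph p).mpr hz)⟩

lemma Walk.connected_induce_biUnion_support {T : SimpleGraph ι} {Y : V → Set ι}
    (hY : ∀ v, (T.induce (Y v)).Connected) (hadj : ∀ ⦃u v⦄, G.Adj u v → (Y u ∩ Y v).Nonempty)
    {x y : V} (p : G.Walk x y) : (T.induce (⋃ v ∈ p.support, Y v)).Connected := by
  induction p with
  | @nil u =>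
    rw [show (⋃ v ∈ (Walk.nil : G.Walk u u).support, Y v) = Y u by ext; simp]
    exact hY u
  | @cons x c y h q ih =>
    obtain ⟨r, hrx, hrc⟩ := hadj h
    rw [show (⋃ v ∈ (Walk.cons h q).support, Y v) = Y x ∪ ⋃ v ∈ q.support, Y v by ext; simp]
    exact induce_union_connected (hY x).preconnected ih.preconnected
      ⟨r, hrx, Set.mem_biUnion q.start_mem_support hrc⟩

lemma cycleGraph_adj_iff_val {n : ℕ} (hn : 2 ≤ n) {u v : Fin n} :
    (cycleGraph n).Adj u v ↔
      u.val + 1 = v.val ∨ v.val + 1 = u.val ∨ u.val + 1 = v.val + n ∨ v.val + 1 = u.val + n := by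
  rw [cycleGraph_adj']
  rcases lt_trichotomy u v with h | rfl | h
  · rw [Fin.coe_sub_iff_lt.mpr h, Fin.sub_val_of_le h.le]; omega
  · rw [Fin.sub_val_of_le le_rfl]; omega
  · rw [Fin.coe_sub_iff_lt.mpr h, Fin.sub_val_of_le h.le]; omega

lemma cycleGraph_exists_walk_support_Icc {n i j : ℕ} (hij : i ≤ j) (hj : j < n) :
    ∃ p : (cycleGraph n).Walk ⟨i, hij.trans_lt hj⟩ ⟨j, hj⟩,
      ∀ z ∈ p.support, i ≤ z.val ∧ z.val ≤ j := by
  induction j, hij using Nat.le_induction with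
  | base => exact ⟨Walk.nil, by simp⟩
  | succ j hij ih =>
    obtain ⟨p, hp⟩ := ih (by omega)
    have hadj : (cycleGraph n).Adj ⟨j, by omega⟩ ⟨j + 1, hj⟩ :=
      (cycleGraph_adj_iff_val (by omega)).mpr (Or.inl rfl)
    refine ⟨p.concat hadj, fun z hz => ?_⟩
    rw [Walk.support_concat, List.mem_append, List.mem_singleton] at hz
    rcases hz with hz | rfl
    · have := hp z hz; omega
    · exact ⟨show i ≤ j + 1 by omega, le_rfl⟩

end SimpleGraph

theorem chordal_of_forall_exists_clique_separator {V : Type} {G : SimpleGraph V}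
    (hsep : ∀ a b, a ≠ b → ¬ G.Adj a b → ∃ C : Set V, G.IsClique C ∧ a ∉ C ∧ b ∉ C ∧
      ∀ p : G.Walk a b, ∃ w ∈ p.support, w ∈ C) :
    Chordal G := by
  intro n hn
  refine ⟨fun f => ?_⟩
  have hadj : ∀ {u v}, G.Adj (f u) (f v) ↔ u.val + 1 = v.val ∨ v.val + 1 = u.val ∨
      u.val + 1 = v.val + n ∨ v.val + 1 = u.val + n :=
    f.map_adj_iff.trans (cycleGraph_adj_iff_val (by omega))
  have hval : ∀ {C : Set V} {z : Fin n} {k : ℕ} (hk : k < n), f z ∈ C → f ⟨k, hk⟩ ∉ C →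
      z.val ≠ k := by
    rintro C z k hk hz hk' rfl
    exact hk' hz
  obtain ⟨C, hC, haC, hbC, hcut⟩ := hsep (f ⟨0, by omega⟩) (f ⟨2, by omega⟩)
    (f.injective.ne (by simp [Fin.ext_iff])) (by rw [hadj]; dsimp only; omega)
  -- `C` meets the arc `f 0, f 1, f 2` in `f 1` and the arc `f 0, f (n - 1), …, f 2` in some
  -- `f k` with `3 ≤ k`; these two lie in the clique `C` but are not adjacent on the cycle.
  obtain ⟨p, hp⟩ := cycleGraph_exists_walk_support_Icc (i := 0) (j := 2) (n := n)
    (by omega) (by omega)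
  obtain ⟨q, hq⟩ := cycleGraph_exists_walk_support_Icc (i := 2) (j := n - 1) (n := n)
    (by omega) (by omega)
  have hwrap : (cycleGraph n).Adj ⟨0, by omega⟩ ⟨n - 1, by omega⟩ :=
    (cycleGraph_adj_iff_val (by omega)).mpr (by simp only; omega)
  obtain ⟨w, hw, hwC⟩ := hcut (p.map f.toHom)
  obtain ⟨w', hw', hw'C⟩ := hcut ((q.reverse.cons hwrap).map f.toHom)
  rw [Walk.support_map, List.mem_map] at hw hw'
  obtain ⟨z, hz, rfl⟩ := hw
  obtain ⟨z', hz', rfl⟩ := hw'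
  simp only [Embedding.coe_toHom] at hwC hw'C
  rw [Walk.support_cons, Walk.support_reverse, List.mem_cons, List.mem_reverse] at hz'
  have h1 : z.val = 1 := by
    have := hp z hz; have := hval _ hwC haC; have := hval _ hwC hbC; omega
  have h3 : 3 ≤ z'.val := by
    have h0 := hval _ hw'C haC
    have h2 := hval _ hw'C hbC
    rcases hz' with rfl | hz'
    · exact absurd rfl h0
    · have := hq z' hz'; omega
  have := hC hwC hw'C (f.injective.ne (Fin.ne_of_val_ne (by omega)))
  rw [hadj] at this
  omega

namespace TreeDecomp

variable {V : Type} {G : SimpleGraph V} (td : TreeDecomp G)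

def Side (s t r : td.ι) : Prop :=
  (td.tree.deleteEdges {s(s, t)}).Reachable t r

lemma not_side_of_adj {s t : td.ι} (h : td.tree.Adj s t) : ¬ td.Side s t s := by
  have hbridge := isAcyclic_iff_forall_adj_isBridge.mp td.tree_isTree.isAcyclic h
  exact fun hs => isBridge_iff.mp hbridge hs.symm

lemma mem_bag_of_not_side_of_side {s t r r' : td.ι} {v : V} (hr : v ∈ td.bag r)
    (hr' : v ∈ td.bag r') (hside : ¬ td.Side s t r) (hside' : td.Side s t r') :
    v ∈ td.bag s ∧ v ∈ td.bag t := by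
  obtain ⟨p, hp⟩ := exists_walk_support_subset_of_connected_induce (td.bag_connected v) hr hr'
  have he : s(s, t) ∈ p.edges :=
    p.mem_edges_of_not_reachable_deleteEdges fun hrr' => hside (hside'.trans hrr'.symm)
  exact ⟨hp _ (p.fst_mem_support_of_mem_edges he), hp _ (p.snd_mem_support_of_mem_edges he)⟩

lemma exists_mem_support_mem_bag_of_side {s t : td.ι} {a b : V} (p : G.Walk a b)
    (ha : ∀ r, a ∈ td.bag r → ¬ td.Side s t r) (hb : ∃ r, b ∈ td.bag r ∧ td.Side s t r) :
    ∃ w ∈ p.support, w ∈ td.bag s ∧ w ∈ td.bag t := by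
  induction p with
  | nil => obtain ⟨r, hr, hside⟩ := hb; exact absurd hside (ha r hr)
  | @cons a c b h q ih =>
    by_cases hc : ∃ r, c ∈ td.bag r ∧ td.Side s t r
    · obtain ⟨r, har, hcr⟩ := td.edge_bag h
      obtain ⟨r', hcr', hside'⟩ := hc
      exact ⟨c, by simp, td.mem_bag_of_not_side_of_side hcr hcr' (ha r har) hside'⟩
    · push Not at hc
      obtain ⟨w, hw, hws⟩ := ih hc hb
      exact ⟨w, List.mem_cons_of_mem _ hw, hws⟩

lemma exists_adj_separating {a b : V} (hab : ∀ r, ¬ (a ∈ td.bag r ∧ b ∈ td.bag r)) :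
    ∃ s t, td.tree.Adj s t ∧ (∀ r, a ∈ td.bag r → ¬ td.Side s t r) ∧
      (∀ r, b ∈ td.bag r → td.Side s t r) := by
  obtain ⟨ra, hra⟩ := td.mem_bag a
  obtain ⟨rb, hrb⟩ := td.mem_bag b
  obtain ⟨p, hp⟩ := td.tree_isTree.connected.preconnected.exists_isPath ra rb
  -- `st` is the first edge of a tree path from a bag of `a` to a bag of `b` that leaves the
  -- bags of `a`.
  induction p with
  | nil => exact absurd ⟨hra, hrb⟩ (hab _)
  | @cons x c y h q ih =>
    by_cases hc : a ∈ td.bag c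
    · exact ih hc hrb hp.of_cons
    · refine ⟨x, c, h, fun r hr hside => hc ?_, fun r hr => ?_⟩
      · exact (td.mem_bag_of_not_side_of_side hra hr (td.not_side_of_adj h) hside).2
      · have hy : td.Side x c y := reachable_deleteEdges_iff_exists_walk.mpr
          ⟨q, fun he => ((Walk.cons_isPath_iff h q).mp hp).2 (q.fst_mem_support_of_mem_edges he)⟩
        by_contra hside
        exact hab x ⟨hra, (td.mem_bag_of_not_side_of_side hr hrb hside hy).1⟩

lemma exists_separator {a b : V} (hab : ∀ r, ¬ (a ∈ td.bag r ∧ b ∈ td.bag r)) :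
    ∃ s t, a ∉ td.bag t ∧ b ∉ td.bag s ∧
      ∀ p : G.Walk a b, ∃ w ∈ p.support, w ∈ td.bag s ∧ w ∈ td.bag t := by
  obtain ⟨s, t, hst, ha, hb⟩ := td.exists_adj_separating hab
  obtain ⟨rb, hrb⟩ := td.mem_bag b
  exact ⟨s, t, fun h => ha t h (Reachable.refl _), fun h => td.not_side_of_adj hst (hb s h),
    fun p => td.exists_mem_support_mem_bag_of_side p ha ⟨rb, hrb, hb rb hrb⟩⟩

theorem chordal_of_forall_isClique_bag (h : ∀ t, G.IsClique (td.bag t)) : Chordal G := by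
  refine chordal_of_forall_exists_clique_separator fun a b hne hnadj => ?_
  obtain ⟨s, t, ha, hb, hcut⟩ :=
    td.exists_separator fun r hr => hnadj (h r hr.1 hr.2 hne)
  exact ⟨td.bag s ∩ td.bag t, (h s).subset Set.inter_subset_left, fun h' => ha h'.2,
    fun h' => hb h'.1, hcut⟩

def singleBag (G : SimpleGraph V) : TreeDecomp G where
  ι := Unit
  tree := ⊥
  tree_isTree := .of_subsingleton
  bag _ := Set.univ
  mem_bag v := ⟨(), Set.mem_univ v⟩
  edge_bag u v _ := ⟨(), Set.mem_univ u, Set.mem_univ v⟩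
  bag_connected v :=
    have : Nonempty {_t : Unit | v ∈ (Set.univ : Set V)} := ⟨⟨(), Set.mem_univ v⟩⟩
    IsTree.of_subsingleton.connected

end TreeDecomp

lemma exists_tdAlpha_eq_treeIndepNum {V : Type} (G : SimpleGraph V) :
    ∃ td : TreeDecomp G, tdAlpha td = treeIndepNum G :=
  Nat.sInf_mem (s := {k | ∃ td : TreeDecomp G, tdAlpha td = k})
    ⟨_, TreeDecomp.singleBag G, rfl⟩

section bagAlpha

variable {V ι : Type} {G : SimpleGraph V} {bag : ι → Set V}

lemma ncard_le_bagAlpha [Finite V] {t : ι} {S : Set V} (hS : S ⊆ bag t)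
    (hind : IsIndepOn G S) :
    S.ncard ≤ bagAlpha G bag :=
  le_csSup ⟨Nat.card V, by rintro _ ⟨t, S, -, -, rfl⟩; exact Set.ncard_le_card S⟩
    ⟨t, S, hS, hind, rfl⟩

lemma bagAlpha_le {k : ℕ} (h : ∀ t, ∀ S ⊆ bag t, IsIndepOn G S → S.ncard ≤ k) :
    bagAlpha G bag ≤ k :=
  csSup_le' (by rintro _ ⟨t, S, hS, hind, rfl⟩; exact h t S hS hind)

lemma isClique_of_bagAlpha_le_one [Finite V] (h : bagAlpha G bag ≤ 1) (t : ι) :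
    G.IsClique (bag t) := by
  intro u hu v hv huv
  by_contra hadj
  have hind : IsIndepOn G {u, v} := Set.pairwise_pair.mpr fun _ => ⟨hadj, fun h => hadj h.symm⟩
  have := ncard_le_bagAlpha (Set.pair_subset hu hv) hind
  rw [Set.ncard_pair huv] at this
  omega

end bagAlpha

lemma derivedGraph_adj {V J : Type} {G : SimpleGraph V} {H : J → G.Subgraph} {i j : J} :
    (derivedGraph G H).Adj i j ↔
      i ≠ j ∧ ∃ u ∈ (H i).verts, ∃ v ∈ (H j).verts, u = v ∨ G.Adj u v := by
  rw [derivedGraph, fromRel_adj]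
  constructor
  · rintro ⟨hij, (⟨v, hvi, hvj⟩ | ⟨u, v, hu, hv, huv⟩) | (⟨v, hvj, hvi⟩ | ⟨v, u, hv, hu, hvu⟩)⟩
    exacts [⟨hij, v, hvi, v, hvj, .inl rfl⟩, ⟨hij, u, hu, v, hv, .inr huv⟩,
      ⟨hij, v, hvi, v, hvj, .inl rfl⟩, ⟨hij, u, hu, v, hv, .inr hvu.symm⟩]
  · rintro ⟨hij, u, hu, v, hv, rfl | huv⟩
    exacts [⟨hij, .inl (.inl ⟨u, hu, hv⟩)⟩, ⟨hij, .inl (.inr ⟨u, v, hu, hv, huv⟩)⟩]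

namespace TreeDecomp

variable {V J : Type} {G : SimpleGraph V} (td : TreeDecomp G) (H : J → G.Subgraph)

def derivedBag (t : td.ι) : Set J :=
  {j | ∃ v ∈ (H j).verts, v ∈ td.bag t}

lemma connected_induce_setOf_mem_derivedBag {j : J} (hconn : (H j).Connected) :
    (td.tree.induce {t | j ∈ td.derivedBag H t}).Connected := by
  obtain ⟨⟨v₀, hv₀⟩, hwalk⟩ := (Subgraph.connected_iff_forall_exists_walk_subgraph _).mp hconn
  obtain ⟨r₀, hr₀⟩ := td.mem_bag v₀
  refine induce_connected_of_patches r₀ ⟨v₀, hv₀, hr₀⟩ fun {r} ⟨v, hv, hr⟩ => ?_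
  obtain ⟨p, hp⟩ := hwalk hv₀ hv
  have hsupp : ∀ w ∈ p.support, w ∈ (H j).verts :=
    fun w hw => hp.1 ((Walk.mem_verts_toSubgraph p).mpr hw)
  refine ⟨⋃ w ∈ p.support, {r | w ∈ td.bag r}, ?_, Set.mem_biUnion p.start_mem_support hr₀,
    Set.mem_biUnion p.end_mem_support hr, ?_⟩
  · simp only [Set.iUnion_subset_iff]
    exact fun w hw r hr => ⟨w, hsupp w hw, hr⟩
  · exact (p.connected_induce_biUnion_support td.bag_connected
      fun u v huv => td.edge_bag huv).preconnected _ _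

def toDerived (hne : ∀ j, (H j).verts.Nonempty) (hconn : ∀ j, (H j).Connected) :
    TreeDecomp (derivedGraph G H) where
  ι := td.ι
  tree := td.tree
  tree_isTree := td.tree_isTree
  bag := td.derivedBag H
  mem_bag j := by
    obtain ⟨v, hv⟩ := hne j
    obtain ⟨t, ht⟩ := td.mem_bag v
    exact ⟨t, v, hv, ht⟩
  edge_bag i j hij := by
    obtain ⟨-, u, hu, v, hv, rfl | huv⟩ := derivedGraph_adj.mp hij
    · obtain ⟨t, ht⟩ := td.mem_bag u
      exact ⟨t, ⟨u, hu, ht⟩, ⟨u, hv, ht⟩⟩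
    · obtain ⟨t, hut, hvt⟩ := td.edge_bag huv
      exact ⟨t, ⟨u, hu, hut⟩, ⟨v, hv, hvt⟩⟩
  bag_connected j := td.connected_induce_setOf_mem_derivedBag H (hconn j)

lemma exists_isIndepOn_ncard_eq_of_subset_derivedBag {t : td.ι} {S : Set J}
    (hS : S ⊆ td.derivedBag H t) (hind : IsIndepOn (derivedGraph G H) S) :
    ∃ S' ⊆ td.bag t, IsIndepOn G S' ∧ S'.ncard = S.ncard := by
  choose g hgH hgt using fun j : S => hS j.2
  have hinj : Function.Injective g := by
    intro i j hij
    by_contra hne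
    exact hind i.2 j.2 (Subtype.coe_ne_coe.mpr hne)
      (derivedGraph_adj.mpr ⟨Subtype.coe_ne_coe.mpr hne, _, hgH i, _, hgH j, .inl hij⟩)
  refine ⟨Set.range g, Set.range_subset_iff.mpr hgt, ?_, ?_⟩
  · rintro _ ⟨i, rfl⟩ _ ⟨j, rfl⟩ hne hadj
    have hij : (i : J) ≠ j := fun h => hne (congrArg g (Subtype.ext h))
    exact hind i.2 j.2 hij (derivedGraph_adj.mpr ⟨hij, _, hgH i, _, hgH j, .inr hadj⟩)
  · rw [Set.ncard_range_of_injective hinj, Nat.card_coe_set_eq]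

lemma tdAlpha_toDerived_le [Finite V] (hne : ∀ j, (H j).verts.Nonempty)
    (hconn : ∀ j, (H j).Connected) : tdAlpha (td.toDerived H hne hconn) ≤ tdAlpha td :=
  bagAlpha_le fun t S hS hind => by
    obtain ⟨S', hS', hind', hcard⟩ := td.exists_isIndepOn_ncard_eq_of_subset_derivedBag H hS hind
    exact hcard ▸ ncard_le_bagAlpha hS' hind'

lemma isClique_derivedBag {t : td.ι} (h : G.IsClique (td.bag t)) :
    (derivedGraph G H).IsClique (td.derivedBag H t) := by
  rintro i ⟨u, hu, hut⟩ j ⟨v, hv, hvt⟩ hij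
  exact derivedGraph_adj.mpr ⟨hij, u, hu, v, hv, (eq_or_ne u v).imp_right (h hut hvt)⟩

end TreeDecomp

theorem stmt19_general {V : Type} [Fintype V] (G : SimpleGraph V)
    {J : Type} (H : J → G.Subgraph)
    (hne : ∀ j, (H j).verts.Nonempty) (hconn : ∀ j, (H j).Connected) :
    treeIndepNum (derivedGraph G H) ≤ treeIndepNum G ∧
    (treeIndepNum G ≤ 1 → Chordal (derivedGraph G H)) := by
  obtain ⟨td, htd⟩ := exists_tdAlpha_eq_treeIndepNum G
  refine ⟨?_, fun h => ?_⟩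
  · calc treeIndepNum (derivedGraph G H) ≤ tdAlpha (td.toDerived H hne hconn) :=
          Nat.sInf_le ⟨_, rfl⟩
      _ ≤ treeIndepNum G := htd ▸ td.tdAlpha_toDerived_le H hne hconn
  · exact (td.toDerived H hne hconn).chordal_of_forall_isClique_bag fun t =>
      td.isClique_derivedBag H (isClique_of_bagAlpha_le_one (htd.trans_le h) t)

theorem stmt19 {V : Type} [Fintype V] (G : SimpleGraph V)
    {J : Type} [Fintype J] (H : J → G.Subgraph)
    (hne : ∀ j, (H j).verts.Nonempty) (hconn : ∀ j, (H j).Connected) :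
    treeIndepNum (derivedGraph G H) ≤ treeIndepNum G ∧
    (treeIndepNum G ≤ 1 → Chordal (derivedGraph G H)) :=
  stmt19_general G H hne hconn
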